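/- Let λ be a dominant integral weight and I ⊆ {1,…,n}, write λ = Σ m_i α_i, and let F_I be the standard parabolic face, i.e. the set of points μ of the weight polytope P whose coefficient of α_i equals m_i for every i ∈ I. Let I̅^0 be the set of indices j such that α_j lies in the connected component of the extended Dynkin diagram, restricted to the complement of I together with the extra node −λ, that contains −λ. Then F_I is the convex hull of W_{I̅^0}·λ. -/

import Mathlib

open RealInnerProductSpace

noncomputable section

variable {E : Type*} [NormedAddCommGroup E] [InnerProductSpace ℝ E] [FiniteDimensional ℝ E]

/-- Reflection in the hyperplane orthogonal to `β`. -/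
def sref (β : E) : E ≃ₗᵢ[ℝ] E := Submodule.reflection (ℝ ∙ β)ᗮ

/-- Data of a system of simple roots of a (crystallographic, irreducible) root system:
the simple roots form a basis of the euclidean space, Cartan integers are integral,
distinct simple roots have nonpositive inner products, and the Dynkin diagram is connected. -/
structure RootData (n : ℕ) (E : Type*) [NormedAddCommGroup E] [InnerProductSpace ℝ E] where
  α : Fin n → E
  b : Module.Basis (Fin n) ℝ E
  hb : ∀ i, b i = α i
  cartan : ∀ i j, ∃ z : ℤ, (z : ℝ) * ⟪α j, α j⟫ = 2 * ⟪α i, α j⟫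
  offdiag : ∀ i j : Fin n, i ≠ j → ⟪α i, α j⟫ ≤ 0
  conn : ∀ i j : Fin n, Relation.ReflTransGen (fun a b => a ≠ b ∧ ⟪α a, α b⟫ ≠ 0) i j

namespace RootData

variable {n : ℕ} (S : RootData n E)

/-- The simple reflections. -/
def s (i : Fin n) : E ≃ₗᵢ[ℝ] E := sref (S.α i)

/-- The Weyl group, generated by the simple reflections. -/
def W : Subgroup (E ≃ₗᵢ[ℝ] E) := Subgroup.closure (Set.range S.s)

/-- The standard parabolic subgroup generated by the simple reflections indexed by `I`. -/
def WI (I : Set (Fin n)) : Subgroup (E ≃ₗᵢ[ℝ] E) := Subgroup.closure (S.s '' I)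

/-- The set of roots:  the Weyl group orbit of the simple roots. -/
def roots : Set E := {β | ∃ w ∈ S.W, ∃ i, β = w (S.α i)}

/-- `x` is dominant: nonnegative inner product with every simple root. -/
def Dominant (x : E) : Prop := ∀ i, 0 ≤ ⟪x, S.α i⟫

/-- The dominant weight `λ = Σ mᵢ αᵢ` (with nonnegative integer coefficients). -/
def lam (m : Fin n → ℕ) : E := ∑ j, (m j : ℝ) • S.α j

/-- `λ` is an integral weight: `2(λ,αᵢ)/(αᵢ,αᵢ)` is a (nonnegative) integer. -/
def IntegralDom (m : Fin n → ℕ) : Prop :=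
  ∀ i, ∃ z : ℕ, (z : ℝ) * ⟪S.α i, S.α i⟫ = 2 * ⟪S.lam m, S.α i⟫

/-- The Weyl group orbit of a point. -/
def orbit (x : E) : Set E := (fun w : E ≃ₗᵢ[ℝ] E => w x) '' (S.W : Set (E ≃ₗᵢ[ℝ] E))

/-- The weight polytope: the convex hull of the Weyl group orbit of `λ`. -/
def poly (m : Fin n → ℕ) : Set E := convexHull ℝ (S.orbit (S.lam m))

/-- `c μ i` is the coefficient of `αᵢ` when `μ` is expressed in the basis of simple roots. -/
def c (μ : E) (i : Fin n) : ℝ := S.b.repr μ i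

/-- The set of weights `P(λ)`:  points of the weight polytope lying in the root lattice. -/
def Pw (m : Fin n → ℕ) : Set E := {μ ∈ S.poly m | ∀ i, ∃ z : ℤ, S.c μ i = z}

/-- `P_I`: the weights whose `αᵢ`-coefficient equals `mᵢ` for all `i ∈ I`. -/
def P_ (m : Fin n → ℕ) (I : Set (Fin n)) : Set E :=
  {μ ∈ S.Pw m | ∀ i ∈ I, S.c μ i = m i}

/-- The standard parabolic face `F_I` of the weight polytope. -/
def F_ (m : Fin n → ℕ) (I : Set (Fin n)) : Set E :=
  {x ∈ S.poly m | ∀ i ∈ I, S.c x i = m i}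

/-- The dominance order: `μ ≤ ν` iff `ν - μ` is a nonnegative integral sum of simple roots. -/
def wle (μ ν : E) : Prop := ∃ a : Fin n → ℕ, ν - μ = ∑ i, (a i : ℝ) • S.α i

/-- Adjacency in the extended Dynkin diagram with extra node `-λ` (encoded as `none`). -/
def adj (m : Fin n → ℕ) : Option (Fin n) → Option (Fin n) → Prop
  | none, none => False
  | none, some j => 0 < ⟪S.lam m, S.α j⟫
  | some i, none => 0 < ⟪S.lam m, S.α i⟫
  | some i, some j => i ≠ j ∧ ⟪S.α i, S.α j⟫ ≠ 0

/-- One step in the extended Dynkin diagram, staying within the vertices `{-λ} ∪ {αₖ : k ∈ K}`. -/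
def within (m : Fin n → ℕ) (K : Set (Fin n)) (a b : Option (Fin n)) : Prop :=
  S.adj m a b ∧ (∀ i, a = some i → i ∈ K) ∧ (∀ i, b = some i → i ∈ K)

/-- `I̅⁰`: indices of the simple roots in the connected component of `-λ` in the subdiagram
of the extended Dynkin diagram on the complement of `I` together with `-λ`. -/
def comp0 (m : Fin n → ℕ) (I : Set (Fin n)) : Set (Fin n) :=
  {j | j ∉ I ∧ Relation.ReflTransGen (S.within m Iᶜ) none (some j)}

/-- The subdiagram of the extended Dynkin diagram on `{-λ} ∪ {αₖ : k ∈ K}` is connected. -/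
def ConnWith (m : Fin n → ℕ) (K : Set (Fin n)) : Prop :=
  ∀ j ∈ K, Relation.ReflTransGen (S.within m K) none (some j)

/-- `ω` is the `i`-th fundamental coweight: `(ω, αⱼ) = δᵢⱼ`. -/
def IsCoweight (i : Fin n) (ω : E) : Prop :=
  ∀ j, ⟪ω, S.α j⟫ = if j = i then 1 else 0

end RootData

variable {n : ℕ}

/-!
The inclusion `W_{I̅⁰} λ ⊆ F_I` holds because each `sⱼ` only moves the `αⱼ`-coordinate and
`I̅⁰ ⊆ Iᶜ`. Conversely, since `λ` is dominant, `λ - wλ` is a nonnegative combination of simple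
roots for every `w ∈ W`, so `cᵢ ≤ mᵢ` on the orbit and the hyperplane `∑_{i ∈ I} cᵢ = ∑_{i ∈ I} mᵢ`
supports `P`: `F_I` is the convex hull of the orbit points `x` on it. If such an `x` is not `λ`,
then `(x, αₖ) < 0` for some `k ∉ I`, and `sₖx = x + zαₖ` with `z` a positive integer; by
induction on the height of `λ - x`, `sₖx ∈ W_{I̅⁰} λ` and `λ - sₖx` is supported on `I̅⁰`. Then
`k ∈ I̅⁰`: either `αₖ` is joined to `-λ`, or `(λ - sₖx, αₖ) < 0` forces a neighbour of `αₖ` in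
the support of `λ - sₖx`.

The nonnegativity of `λ - wλ` rests on the positivity of roots: `ℓ(w) ≤ ℓ(wsᵢ)` implies
`wαᵢ ≥ 0`. Given `t` with `ℓ(wsₜ) < ℓ(w)`, write `w = v u` with `u` in the dihedral group
generated by `sᵢ, sₜ` and `v` of minimal length, so that `v` ascends at `sᵢ` and `sₜ`; by
induction `vαᵢ, vαₜ ≥ 0`, which reduces the claim to the rank-two root systems `A₁ × A₁`, `A₂`,
`B₂`, `G₂`, checked by a finite computation with `2 × 2` integer matrices.
-/

section

omit [FiniteDimensional ℝ E]

theorem sref_apply (β x : E) :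
    sref β x = x - (2 * ⟪β, x⟫ / ⟪β, β⟫) • β := by
  rw [sref, Submodule.reflection_apply, Submodule.starProjection_orthogonal_val,
    Submodule.starProjection_singleton, ← real_inner_self_eq_norm_sq]
  simp only [RCLike.ofReal_real_eq_id, id]
  match_scalars <;> ring

theorem real_inner_mul_inner_self_lt {V : Type*} [NormedAddCommGroup V] [InnerProductSpace ℝ V]
    {x y : V} (hx : x ≠ 0) (hxy : ∀ r : ℝ, y ≠ r • x) :
    ⟪x, y⟫ * ⟪x, y⟫ < ⟪x, x⟫ * ⟪y, y⟫ := by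
  have hy : y ≠ 0 := by simpa using hxy 0
  have hlt : |⟪x, y⟫| < ‖x‖ * ‖y‖ := by
    refine (abs_real_inner_le_norm x y).lt_of_ne fun h => ?_
    obtain ⟨r, -, hr⟩ := (norm_inner_eq_norm_iff (𝕜 := ℝ) hx hy).1 (by rwa [Real.norm_eq_abs])
    exact hxy r hr
  rw [real_inner_self_eq_norm_sq, real_inner_self_eq_norm_sq, ← abs_mul_abs_self]
  nlinarith [abs_nonneg ⟪x, y⟫]

theorem mem_convexHull_inter_of_le {V : Type*} [AddCommGroup V] [Module ℝ V] {s : Set V}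
    {f : V →ₗ[ℝ] ℝ} {r : ℝ} (hs : ∀ y ∈ s, f y ≤ r) {x : V} (hx : x ∈ convexHull ℝ s)
    (hfx : f x = r) : x ∈ convexHull ℝ (s ∩ {y | f y = r}) := by
  set K := convexHull ℝ (s ∩ {y | f y = r})
  have hK : K ⊆ {y | f y = r} :=
    convexHull_min Set.inter_subset_right (convex_hyperplane f.isLinear r)
  have hlt : ∀ u v : V, f u < r → f v ≤ r → ∀ a b : ℝ, 0 < a → 0 < b → a + b = 1 →
      f (a • u + b • v) < r := by
    intro u v hu hv a b ha hb hab
    rw [map_add, map_smul, map_smul, smul_eq_mul, smul_eq_mul, ← one_mul r, ← hab, add_mul]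
    linarith [mul_lt_mul_of_pos_left hu ha, mul_le_mul_of_nonneg_left hv hb.le]
  -- `s` lies in the convex set `{f < r} ∪ K`, which meets the hyperplane `f = r` only in `K`.
  have hconv : Convex ℝ ({y | f y < r} ∪ K) := by
    refine convex_iff_openSegment_subset.2 fun y hy z hz _ ⟨a, b, ha, hb, hab, hp⟩ => hp ▸ ?_
    have hz' : f z ≤ r := hz.elim (fun h => le_of_lt h) fun h => (hK h).le
    rcases hy with hy | hy
    · exact Or.inl (hlt y z hy hz' a b ha hb hab)
    rcases hz with hz | hz
    · exact Or.inl (add_comm (a • y) (b • z) ▸ hlt z y hz (hK hy).le b a hb ha (by linarith))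
    · exact Or.inr (convex_convexHull ℝ _ hy hz ha.le hb.le hab)
  have hsub : s ⊆ {y | f y < r} ∪ K := fun y hy =>
    (hs y hy).lt_or_eq.imp id fun h => subset_convexHull ℝ _ ⟨hy, h⟩
  exact (convexHull_min hsub hconv hx).resolve_left (by simp [hfx])

namespace RootData

variable (S : RootData n E)

theorem α_ne_zero (i : Fin n) : S.α i ≠ 0 := S.hb i ▸ S.b.ne_zero i

theorem inner_α_self_pos (i : Fin n) : 0 < ⟪S.α i, S.α i⟫ :=
  real_inner_self_pos.2 (S.α_ne_zero i)

theorem repr_α (i : Fin n) : S.b.repr (S.α i) = Finsupp.single i 1 := by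
  rw [← S.hb i, S.b.repr_self]

theorem repr_lam (m : Fin n → ℕ) (k : Fin n) : S.b.repr (S.lam m) k = m k := by
  simp [lam, repr_α, Finsupp.single_apply]

theorem inner_α_eq_sum (x : E) (k : Fin n) :
    ⟪x, S.α k⟫ = ∑ j, S.b.repr x j * ⟪S.α j, S.α k⟫ := by
  conv_lhs => rw [← S.b.sum_repr x]
  simp [sum_inner, real_inner_smul_left, S.hb]

theorem s_apply (i : Fin n) (x : E) :
    S.s i x = x - (2 * ⟪S.α i, x⟫ / ⟪S.α i, S.α i⟫) • S.α i :=
  sref_apply (S.α i) x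

theorem s_apply_of_cartan {i : Fin n} {x : E} {z : ℝ}
    (hz : z * ⟪S.α i, S.α i⟫ = 2 * ⟪x, S.α i⟫) : S.s i x = x - z • S.α i := by
  rw [s_apply, real_inner_comm, ← hz, mul_div_cancel_right₀ _ (S.inner_α_self_pos i).ne']

theorem s_apply_self (i : Fin n) : S.s i (S.α i) = -S.α i := by
  rw [S.s_apply_of_cartan (z := 2) rfl]
  module

theorem s_apply_of_inner_eq_zero {i : Fin n} {x : E} (h : ⟪S.α i, x⟫ = 0) : S.s i x = x := by
  simp [s_apply, h]

theorem s_apply_s_apply (i : Fin n) (x : E) : S.s i (S.s i x) = x :=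
  Submodule.reflection_reflection _ x

theorem s_mul_self (i : Fin n) : S.s i * S.s i = 1 :=
  LinearIsometryEquiv.ext (S.s_apply_s_apply i)

theorem s_mem_WI {J : Set (Fin n)} {i : Fin n} (hi : i ∈ J) : S.s i ∈ S.WI J :=
  Subgroup.subset_closure ⟨i, hi, rfl⟩

theorem s_mem_W (i : Fin n) : S.s i ∈ S.W := Subgroup.subset_closure ⟨i, rfl⟩

theorem WI_le_W (J : Set (Fin n)) : S.WI J ≤ S.W :=
  Subgroup.closure_mono (Set.image_subset_range _ _)

theorem repr_s_apply_of_ne {i k : Fin n} (h : i ≠ k) (x : E) :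
    S.b.repr (S.s k x) i = S.b.repr x i := by
  simp [s_apply, repr_α, h.symm]

theorem repr_sub_s_apply_of_ne {i k : Fin n} (h : i ≠ k) (y x : E) :
    S.b.repr (y - S.s k x) i = S.b.repr (y - x) i := by
  rw [map_sub, map_sub, Finsupp.sub_apply, Finsupp.sub_apply, S.repr_s_apply_of_ne h]

theorem repr_apply_of_mem_WI {J : Set (Fin n)} {w : E ≃ₗᵢ[ℝ] E} (hw : w ∈ S.WI J) {i : Fin n}
    (hi : i ∉ J) (x : E) : S.b.repr (w x) i = S.b.repr x i := by
  induction hw using Subgroup.closure_induction generalizing x with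
  | mem _ h =>
    obtain ⟨k, hk, rfl⟩ := h
    exact S.repr_s_apply_of_ne (ne_of_mem_of_not_mem hk hi).symm x
  | one => rfl
  | mul _ _ _ _ hv hw => exact (hv _).trans (hw x)
  | inv w _ hw => rw [← hw, LinearIsometryEquiv.coe_inv, w.apply_symm_apply]

def IsIntegralWeight (x : E) : Prop :=
  ∀ k, ∃ z : ℤ, (z : ℝ) * ⟪S.α k, S.α k⟫ = 2 * ⟪x, S.α k⟫

theorem isIntegralWeight_lam (m : Fin n → ℕ) : S.IsIntegralWeight (S.lam m) := by
  intro k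
  choose z hz using fun j => S.cartan j k
  refine ⟨∑ j, m j * z j, ?_⟩
  push_cast
  simp only [lam, sum_inner, real_inner_smul_left, Finset.mul_sum, Finset.sum_mul]
  refine Finset.sum_congr rfl fun j _ => ?_
  rw [mul_assoc, hz j]
  ring

variable {S} in
theorem IsIntegralWeight.s_apply {x : E} (hx : S.IsIntegralWeight x) (j : Fin n) :
    S.IsIntegralWeight (S.s j x) := by
  obtain ⟨z, hz⟩ := hx j
  intro k
  obtain ⟨zk, hzk⟩ := hx k
  obtain ⟨c, hc⟩ := S.cartan j k
  refine ⟨zk - z * c, ?_⟩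
  rw [S.s_apply_of_cartan hz, inner_sub_left, real_inner_smul_left]
  push_cast
  linear_combination hzk - (z : ℝ) * hc

def wordProd (l : List (Fin n)) : E ≃ₗᵢ[ℝ] E := (l.map S.s).prod

@[simp]
theorem wordProd_nil : S.wordProd [] = 1 := rfl

@[simp]
theorem wordProd_cons (i : Fin n) (l : List (Fin n)) :
    S.wordProd (i :: l) = S.s i * S.wordProd l := List.prod_cons

@[simp]
theorem wordProd_append (l l' : List (Fin n)) :
    S.wordProd (l ++ l') = S.wordProd l * S.wordProd l' := by
  simp [wordProd]

theorem wordProd_mem_W (l : List (Fin n)) : S.wordProd l ∈ S.W := by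
  induction l with
  | nil => exact S.W.one_mem
  | cons i l ih => exact S.W.mul_mem (S.s_mem_W i) ih

theorem exists_wordProd_eq {w : E ≃ₗᵢ[ℝ] E} (hw : w ∈ S.W) : ∃ l, S.wordProd l = w := by
  induction hw using Subgroup.closure_induction_left with
  | one => exact ⟨[], rfl⟩
  | mul_left _ h _ _ ih =>
    obtain ⟨i, rfl⟩ := h
    obtain ⟨l, rfl⟩ := ih
    exact ⟨i :: l, S.wordProd_cons i l⟩
  | inv_mul_cancel _ h _ _ ih =>
    obtain ⟨i, rfl⟩ := h
    obtain ⟨l, rfl⟩ := ih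
    exact ⟨i :: l, by rw [wordProd_cons, inv_eq_of_mul_eq_one_left (S.s_mul_self i)]⟩

/-- The length of `w` in the simple reflections (`0`, a junk value, for `w ∉ W`). -/
def length (w : E ≃ₗᵢ[ℝ] E) : ℕ := sInf {k | ∃ l, S.wordProd l = w ∧ l.length = k}

theorem length_wordProd_le (l : List (Fin n)) : S.length (S.wordProd l) ≤ l.length :=
  Nat.sInf_le ⟨l, rfl, rfl⟩

theorem exists_reduced_word {w : E ≃ₗᵢ[ℝ] E} (hw : w ∈ S.W) :
    ∃ l, S.wordProd l = w ∧ l.length = S.length w := by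
  obtain ⟨l, rfl⟩ := S.exists_wordProd_eq hw
  exact Nat.sInf_mem (s := {k | ∃ l', S.wordProd l' = S.wordProd l ∧ l'.length = k})
    ⟨_, l, rfl, rfl⟩

theorem length_mul_wordProd_le {w : E ≃ₗᵢ[ℝ] E} (hw : w ∈ S.W) (l : List (Fin n)) :
    S.length (w * S.wordProd l) ≤ S.length w + l.length := by
  obtain ⟨l₀, rfl, hl₀⟩ := S.exists_reduced_word hw
  rw [← wordProd_append, ← hl₀, ← List.length_append]
  exact S.length_wordProd_le _

theorem eq_one_of_length_eq_zero {w : E ≃ₗᵢ[ℝ] E} (hw : w ∈ S.W) (h : S.length w = 0) :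
    w = 1 := by
  obtain ⟨l, rfl, hl⟩ := S.exists_reduced_word hw
  rw [List.length_eq_zero_iff.1 (hl.trans h), wordProd_nil]

theorem exists_length_mul_s_lt {w : E ≃ₗᵢ[ℝ] E} (hw : w ∈ S.W) (h : S.length w ≠ 0) :
    ∃ t, S.length (w * S.s t) < S.length w := by
  obtain ⟨l, rfl, hl⟩ := S.exists_reduced_word hw
  obtain rfl | ⟨l', t, rfl⟩ := l.eq_nil_or_concat'
  · exact absurd hl.symm h
  refine ⟨t, ?_⟩
  have hw' : S.wordProd (l' ++ [t]) * S.s t = S.wordProd l' := by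
    simp [mul_assoc, s_mul_self]
  rw [hw', ← hl]
  exact (S.length_wordProd_le l').trans_lt (by simp)

end RootData

namespace RankTwo

open Matrix

/-- The matrices of `sᵢ` (letter `false`) and `sₜ` (letter `true`) in the basis `αᵢ, αₜ`, where
`a = 2(αₜ, αᵢ)/(αᵢ, αᵢ)` and `b = 2(αᵢ, αₜ)/(αₜ, αₜ)`. -/
def gen (a b : ℤ) : Bool → Matrix (Fin 2) (Fin 2) ℤ
  | false => !![-1, -a; 0, 1]
  | true => !![1, 0; -b, -1]

def wordMatrix (a b : ℤ) (u : List Bool) : Matrix (Fin 2) (Fin 2) ℤ := (u.map (gen a b)).prod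

theorem gen_mul_self (a b : ℤ) (x : Bool) : gen a b x * gen a b x = 1 := by
  cases x <;> simp [gen, one_fin_two]

theorem wordMatrix_concat (a b : ℤ) (u : List Bool) (x : Bool) :
    wordMatrix a b (u ++ [x]) = wordMatrix a b u * gen a b x := by
  simp [wordMatrix]

def inversions (L : List (Fin 2 → ℤ)) (g : Matrix (Fin 2) (Fin 2) ℤ) : ℕ :=
  L.countP fun v => -(g *ᵥ v) ∈ L

/-- A finite certificate for the rank-two case. `G` is closed under the generators, so it contains
every `wordMatrix a b u`; for the positive roots `L`, `inversions L` is a lower bound for the word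
length (it grows by at most one per letter) that is attained (it can be lowered at every `g ≠ 1`),
and it drops under the letter `false` unless the first column `g αᵢ` is nonnegative. -/
structure IsCertificate (a b : ℤ) (G : List (Matrix (Fin 2) (Fin 2) ℤ))
    (L : List (Fin 2 → ℤ)) : Prop where
  one_mem : 1 ∈ G
  inversions_one : inversions L 1 = 0
  mul_gen_mem : ∀ g ∈ G, ∀ x, g * gen a b x ∈ G
  inversions_mul_gen_le : ∀ g ∈ G, ∀ x, inversions L (g * gen a b x) ≤ inversions L g + 1
  exists_inversions_mul_gen_lt :
    ∀ g ∈ G, g ≠ 1 → ∃ x, inversions L (g * gen a b x) < inversions L g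
  nonneg_or_inversions_lt : ∀ g ∈ G,
    (0 ≤ g 0 0 ∧ 0 ≤ g 1 0) ∨ inversions L (g * gen a b false) < inversions L g

variable {a b : ℤ} {G : List (Matrix (Fin 2) (Fin 2) ℤ)} {L : List (Fin 2 → ℤ)}

theorem isCertificate_iff : IsCertificate a b G L ↔
    1 ∈ G ∧ inversions L 1 = 0 ∧ (∀ g ∈ G, ∀ x, g * gen a b x ∈ G) ∧
      (∀ g ∈ G, ∀ x, inversions L (g * gen a b x) ≤ inversions L g + 1) ∧
      (∀ g ∈ G, g ≠ 1 → ∃ x, inversions L (g * gen a b x) < inversions L g) ∧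
      ∀ g ∈ G, (0 ≤ g 0 0 ∧ 0 ≤ g 1 0) ∨ inversions L (g * gen a b false) < inversions L g :=
  ⟨fun ⟨h₁, h₂, h₃, h₄, h₅, h₆⟩ => ⟨h₁, h₂, h₃, h₄, h₅, h₆⟩,
    fun ⟨h₁, h₂, h₃, h₄, h₅, h₆⟩ => ⟨h₁, h₂, h₃, h₄, h₅, h₆⟩⟩

instance : Decidable (IsCertificate a b G L) := decidable_of_iff _ isCertificate_iff.symm

namespace IsCertificate

theorem wordMatrix_mem_and_inversions_le (hC : IsCertificate a b G L) (u : List Bool) :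
    wordMatrix a b u ∈ G ∧ inversions L (wordMatrix a b u) ≤ u.length := by
  induction u using List.reverseRecOn with
  | nil => exact ⟨hC.one_mem, hC.inversions_one.le⟩
  | append_singleton u x ih =>
    have := hC.inversions_mul_gen_le _ ih.1 x
    rw [wordMatrix_concat, List.length_append, List.length_singleton]
    exact ⟨hC.mul_gen_mem _ ih.1 x, by omega⟩

theorem exists_wordMatrix_eq (hC : IsCertificate a b G L) {g : Matrix (Fin 2) (Fin 2) ℤ}
    (hg : g ∈ G) : ∃ u, wordMatrix a b u = g ∧ u.length ≤ inversions L g := by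
  induction h : inversions L g using Nat.strong_induction_on generalizing g with
  | _ N ih =>
    obtain rfl | hg1 := eq_or_ne g 1
    · exact ⟨[], rfl, Nat.zero_le _⟩
    obtain ⟨x, hx⟩ := hC.exists_inversions_mul_gen_lt g hg hg1
    obtain ⟨u, hu, hlen⟩ := ih _ (h ▸ hx) (hC.mul_gen_mem g hg x) rfl
    refine ⟨u ++ [x], ?_, ?_⟩
    · rw [wordMatrix_concat, hu, mul_assoc, gen_mul_self, mul_one]
    · rw [List.length_append, List.length_singleton]
      omega

theorem nonneg_or_exists_shorter (hC : IsCertificate a b G L) (u : List Bool) :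
    (0 ≤ wordMatrix a b u 0 0 ∧ 0 ≤ wordMatrix a b u 1 0) ∨
      ∃ u', wordMatrix a b u' = wordMatrix a b (u ++ [false]) ∧ u'.length < u.length := by
  obtain ⟨hmem, hle⟩ := hC.wordMatrix_mem_and_inversions_le u
  refine (hC.nonneg_or_inversions_lt _ hmem).imp_right fun hlt => ?_
  rw [wordMatrix_concat]
  obtain ⟨u', hu', hlen⟩ := hC.exists_wordMatrix_eq (hC.mul_gen_mem _ hmem false)
  exact ⟨u', hu', by omega⟩

end IsCertificate

def dihedralGroup (a b : ℤ) (m : ℕ) : List (Matrix (Fin 2) (Fin 2) ℤ) :=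
  (List.range m).flatMap fun k =>
    [(gen a b false * gen a b true) ^ k, (gen a b false * gen a b true) ^ k * gen a b false]

/-- The pairs `(a, b)` allowed by the hypotheses are the Cartan pairs of `A₁ × A₁`, `A₂`, `B₂` and
`G₂` (the last two in both orders); each list `L` consists of the positive roots. -/
theorem exists_isCertificate (ha : a ≤ 0) (hb : b ≤ 0) (hab : a * b < 4)
    (h0 : a = 0 ↔ b = 0) : ∃ G L, IsCertificate a b G L := by
  obtain ⟨rfl, rfl⟩ | ⟨ha1, hb1⟩ : a = 0 ∧ b = 0 ∨ a ≤ -1 ∧ b ≤ -1 := by omega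
  · exact ⟨dihedralGroup 0 0 2, [![1, 0], ![0, 1]], by decide⟩
  have ha3 : -3 ≤ a := by nlinarith
  have hb3 : -3 ≤ b := by nlinarith
  interval_cases a <;> interval_cases b <;> norm_num at hab
  · exact ⟨dihedralGroup (-3) (-1) 6, [![1, 0], ![0, 1], ![1, 1], ![2, 1], ![3, 1], ![3, 2]],
      by decide⟩
  · exact ⟨dihedralGroup (-2) (-1) 4, [![1, 0], ![0, 1], ![1, 1], ![2, 1]], by decide⟩
  · exact ⟨dihedralGroup (-1) (-3) 6, [![1, 0], ![0, 1], ![1, 1], ![1, 2], ![1, 3], ![2, 3]],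
      by decide⟩
  · exact ⟨dihedralGroup (-1) (-2) 4, [![1, 0], ![0, 1], ![1, 1], ![1, 2]], by decide⟩
  · exact ⟨dihedralGroup (-1) (-1) 3, [![1, 0], ![0, 1], ![1, 1]], by decide⟩

end RankTwo

namespace RootData

open Matrix RankTwo

variable (S : RootData n E)

/-- The word in `sᵢ` (letter `false`) and `sₜ` (letter `true`). -/
def dihedralWord (i t : Fin n) (u : List Bool) : List (Fin n) := u.map fun x => cond x t i

@[simp]
theorem dihedralWord_nil (i t : Fin n) : dihedralWord i t [] = [] := rfl

@[simp]
theorem dihedralWord_cons (i t : Fin n) (x : Bool) (u : List Bool) :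
    dihedralWord i t (x :: u) = cond x t i :: dihedralWord i t u := rfl

@[simp]
theorem length_dihedralWord (i t : Fin n) (u : List Bool) :
    (dihedralWord i t u).length = u.length := List.length_map _

theorem wordProd_dihedralWord_apply_of_inner_eq_zero {i t : Fin n} (u : List Bool) {z : E}
    (hi : ⟪S.α i, z⟫ = 0) (ht : ⟪S.α t, z⟫ = 0) : S.wordProd (dihedralWord i t u) z = z := by
  induction u with
  | nil => rfl
  | cons x u ih =>
    rw [dihedralWord_cons, wordProd_cons, LinearIsometryEquiv.coe_mul, Function.comp_apply, ih]
    cases x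
    exacts [S.s_apply_of_inner_eq_zero hi, S.s_apply_of_inner_eq_zero ht]

def planePoint (i t : Fin n) (p : Fin 2 → ℝ) : E := p 0 • S.α i + p 1 • S.α t

section CartanPair

variable {S} {i t : Fin n} {a b : ℤ} (ha : (a : ℝ) * ⟪S.α i, S.α i⟫ = 2 * ⟪S.α t, S.α i⟫)
  (hb : (b : ℝ) * ⟪S.α t, S.α t⟫ = 2 * ⟪S.α i, S.α t⟫)
include ha hb

theorem s_cond_planePoint (x : Bool) (p : Fin 2 → ℝ) :
    S.s (cond x t i) (S.planePoint i t p) =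
      S.planePoint i t ((gen a b x).map (Int.castRingHom ℝ) *ᵥ p) := by
  cases x <;>
  · simp [planePoint, gen, s_apply_self, S.s_apply_of_cartan ha, S.s_apply_of_cartan hb, mulVec,
      dotProduct, Fin.sum_univ_two]
    module

theorem wordProd_dihedralWord_planePoint (u : List Bool) (p : Fin 2 → ℝ) :
    S.wordProd (dihedralWord i t u) (S.planePoint i t p) =
      S.planePoint i t ((wordMatrix a b u).map (Int.castRingHom ℝ) *ᵥ p) := by
  induction u generalizing p with
  | nil => simp [wordMatrix]
  | cons x u ih =>
    simp only [dihedralWord_cons, wordMatrix, List.map_cons, List.prod_cons] at ih ⊢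
    rw [wordProd_cons, LinearIsometryEquiv.coe_mul, Function.comp_apply, ih,
      s_cond_planePoint ha hb, Matrix.map_mul, mulVec_mulVec]

/-- Both sides agree on the plane spanned by `αᵢ, αₜ` and fix its orthogonal complement. -/
theorem wordProd_dihedralWord_eq {u u' : List Bool} (h : wordMatrix a b u = wordMatrix a b u') :
    S.wordProd (dihedralWord i t u) = S.wordProd (dihedralWord i t u') := by
  ext x
  have : FiniteDimensional ℝ (Submodule.span ℝ {S.α i, S.α t}) :=
    FiniteDimensional.span_of_finite ℝ (Set.toFinite _)
  obtain ⟨y, hy, z, hz, rfl⟩ := (Submodule.span ℝ {S.α i, S.α t}).exists_add_mem_mem_orthogonal x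
  obtain ⟨c, d, rfl⟩ := Submodule.mem_span_pair.1 hy
  have hzi : ⟪S.α i, z⟫ = 0 := hz _ (Submodule.subset_span (by simp))
  have hzt : ⟪S.α t, z⟫ = 0 := hz _ (Submodule.subset_span (by simp))
  have hp : c • S.α i + d • S.α t = S.planePoint i t ![c, d] := rfl
  rw [hp, map_add, map_add, wordProd_dihedralWord_planePoint ha hb,
    wordProd_dihedralWord_planePoint ha hb, h,
    S.wordProd_dihedralWord_apply_of_inner_eq_zero u hzi hzt,
    S.wordProd_dihedralWord_apply_of_inner_eq_zero u' hzi hzt]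

end CartanPair

theorem exists_cartan_isCertificate {i t : Fin n} (hit : i ≠ t) :
    ∃ a b : ℤ, (a : ℝ) * ⟪S.α i, S.α i⟫ = 2 * ⟪S.α t, S.α i⟫ ∧
      (b : ℝ) * ⟪S.α t, S.α t⟫ = 2 * ⟪S.α i, S.α t⟫ ∧ ∃ G L, IsCertificate a b G L := by
  obtain ⟨a, ha⟩ := S.cartan t i
  obtain ⟨b, hb⟩ := S.cartan i t
  refine ⟨a, b, ha, hb, ?_⟩
  rw [real_inner_comm (S.α i) (S.α t)] at ha
  have hi := S.inner_α_self_pos i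
  have ht := S.inner_α_self_pos t
  have hoff := S.offdiag i t hit
  have hzero : ∀ (z : ℤ) (r : ℝ), 0 < r → z * r = 2 * ⟪S.α i, S.α t⟫ →
      (z = 0 ↔ ⟪S.α i, S.α t⟫ = 0) := fun z r hr h => by
    constructor
    · rintro rfl
      rw [Int.cast_zero, zero_mul] at h
      linarith
    · intro h0
      exact_mod_cast (mul_eq_zero.1 (h.trans (by rw [h0, mul_zero]))).resolve_right hr.ne'
  have hcs := real_inner_mul_inner_self_lt (S.α_ne_zero i) (y := S.α t) fun r h => by
    simpa [repr_α, Finsupp.single_apply, hit] using congr_arg (S.b.repr · t) h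
  refine exists_isCertificate ?_ ?_ ?_ ((hzero a _ hi ha).trans (hzero b _ ht hb).symm)
  · exact_mod_cast (show (a : ℝ) ≤ 0 by nlinarith)
  · exact_mod_cast (show (b : ℝ) ≤ 0 by nlinarith)
  · exact_mod_cast (show (a * b : ℝ) < 4 by nlinarith)

theorem dihedral_nonneg_or_exists_shorter {i t : Fin n} (hit : i ≠ t) (u : List Bool) :
    (∃ p q : ℝ, 0 ≤ p ∧ 0 ≤ q ∧
      S.wordProd (dihedralWord i t u) (S.α i) = p • S.α i + q • S.α t) ∨
    ∃ u' : List Bool, S.wordProd (dihedralWord i t u') = S.wordProd (dihedralWord i t u) * S.s i ∧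
      u'.length < u.length := by
  obtain ⟨a, b, ha, hb, G, L, hC⟩ := S.exists_cartan_isCertificate hit
  refine (hC.nonneg_or_exists_shorter u).imp (fun ⟨hp, hq⟩ => ?_) fun ⟨u', hu', hlen⟩ => ?_
  · refine ⟨_, _, Int.cast_nonneg hp, Int.cast_nonneg hq, ?_⟩
    have h1 : S.α i = S.planePoint i t ![1, 0] := by simp [planePoint]
    rw [h1, wordProd_dihedralWord_planePoint ha hb]
    simp [planePoint, mulVec, dotProduct, Fin.sum_univ_two]
  · refine ⟨u', ?_, hlen⟩
    rw [wordProd_dihedralWord_eq ha hb hu']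
    simp [dihedralWord]

theorem exists_dihedral_factorization {w : E ≃ₗᵢ[ℝ] E} (hw : w ∈ S.W) (i t : Fin n) :
    ∃ v ∈ S.W, ∃ u : List Bool, w = v * S.wordProd (dihedralWord i t u) ∧
      S.length v + u.length = S.length w ∧
      S.length v ≤ S.length (v * S.s i) ∧ S.length v ≤ S.length (v * S.s t) := by
  classical
  have hP : ∃ k, ∃ v ∈ S.W, ∃ u : List Bool, w = v * S.wordProd (dihedralWord i t u) ∧
      S.length v + u.length = S.length w ∧ S.length v = k :=
    ⟨_, w, hw, [], by simp [dihedralWord], rfl, rfl⟩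
  obtain ⟨v, hv, u, hwv, hlen, hk⟩ := Nat.find_spec hP
  refine ⟨v, hv, u, hwv, hlen, ?_⟩
  have hasc : ∀ x : Bool, S.length v ≤ S.length (v * S.s (cond x t i)) := by
    intro x
    by_contra! hlt
    have hv' := S.W.mul_mem hv (S.s_mem_W (cond x t i))
    have hw' : w = v * S.s (cond x t i) * S.wordProd (dihedralWord i t (x :: u)) := by
      rw [hwv, dihedralWord_cons, wordProd_cons, ← mul_assoc, mul_assoc v, s_mul_self, mul_one]
    have hle := S.length_mul_wordProd_le hv' (dihedralWord i t (x :: u))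
    rw [← hw', length_dihedralWord, List.length_cons] at hle
    refine Nat.find_min hP (hk ▸ hlt) ⟨_, hv', x :: u, hw', ?_, rfl⟩
    rw [List.length_cons]
    omega
  exact ⟨hasc false, hasc true⟩

theorem repr_apply_α_nonneg_of_length_le {w : E ≃ₗᵢ[ℝ] E} (hw : w ∈ S.W) {i : Fin n}
    (h : S.length w ≤ S.length (w * S.s i)) : 0 ≤ S.b.repr (w (S.α i)) := by
  induction hN : S.length w using Nat.strong_induction_on generalizing w i with
  | _ N ih =>
    by_cases h0 : S.length w = 0
    · rw [S.eq_one_of_length_eq_zero hw h0, LinearIsometryEquiv.coe_one, id, repr_α]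
      exact Finsupp.single_nonneg.2 zero_le_one
    obtain ⟨t, ht⟩ := S.exists_length_mul_s_lt hw h0
    have hit : i ≠ t := by
      rintro rfl
      omega
    obtain ⟨v, hv, u, rfl, hlen, hvi, hvt⟩ := S.exists_dihedral_factorization hw i t
    have hvlt : S.length v < N := by
      refine hN ▸ lt_of_le_of_ne (hlen ▸ Nat.le_add_right _ _) fun hvw => ?_
      rw [hvw, Nat.add_eq_left, List.length_eq_zero_iff] at hlen
      subst hlen
      simp only [dihedralWord_nil, wordProd_nil, mul_one] at ht
      omega
    rcases S.dihedral_nonneg_or_exists_shorter hit u with ⟨p, q, hp, hq, hpq⟩ | ⟨u', hu', hlt⟩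
    · rw [LinearIsometryEquiv.coe_mul, Function.comp_apply, hpq, map_add, map_smul, map_smul,
        map_add, map_smul, map_smul]
      exact add_nonneg (smul_nonneg hp (ih _ hvlt hv hvi rfl))
        (smul_nonneg hq (ih _ hvlt hv hvt rfl))
    · have hle := S.length_mul_wordProd_le hv (dihedralWord i t u')
      rw [hu', ← mul_assoc, length_dihedralWord] at hle
      omega

theorem repr_sub_apply_nonneg {x : E} (hx : S.Dominant x) {w : E ≃ₗᵢ[ℝ] E} (hw : w ∈ S.W) :
    0 ≤ S.b.repr (x - w x) := by
  induction hN : S.length w using Nat.strong_induction_on generalizing w with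
  | _ N ih =>
    by_cases h0 : S.length w = 0
    · simp [S.eq_one_of_length_eq_zero hw h0]
    obtain ⟨t, ht⟩ := S.exists_length_mul_s_lt hw h0
    have hu := S.W.mul_mem hw (S.s_mem_W t)
    have hwu : w = w * S.s t * S.s t := by rw [mul_assoc, s_mul_self, mul_one]
    have hc : 0 ≤ 2 * ⟪S.α t, x⟫ / ⟪S.α t, S.α t⟫ :=
      div_nonneg (by linarith [real_inner_comm x (S.α t) ▸ hx t]) (S.inner_α_self_pos t).le
    have hsplit : x - w x = (x - (w * S.s t) x) +
        (2 * ⟪S.α t, x⟫ / ⟪S.α t, S.α t⟫) • (w * S.s t) (S.α t) := by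
      conv_lhs => rw [hwu, LinearIsometryEquiv.coe_mul, Function.comp_apply, s_apply]
      rw [map_sub, map_smul]
      abel
    rw [hsplit, map_add, map_smul]
    exact add_nonneg (ih _ (hN ▸ ht) hu rfl)
      (smul_nonneg hc (S.repr_apply_α_nonneg_of_length_le hu (hwu ▸ ht.le)))

def parabolicOrbit (J : Set (Fin n)) (x : E) : Set E :=
  (fun w : E ≃ₗᵢ[ℝ] E => w x) '' (S.WI J : Set (E ≃ₗᵢ[ℝ] E))

def height (x : E) : ℝ := ∑ j, S.b.repr x j

theorem height_add_smul_α (x : E) (c : ℝ) (k : Fin n) :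
    S.height (x + c • S.α k) = S.height x + c := by
  simp [height, repr_α, Finset.sum_add_distrib, Finsupp.single_apply]

theorem height_nonneg {x : E} (hx : 0 ≤ S.b.repr x) : 0 ≤ S.height x :=
  Finset.sum_nonneg fun j _ => hx j

theorem inner_s_apply_α (k : Fin n) (x : E) : ⟪S.s k x, S.α k⟫ = -⟪x, S.α k⟫ := by
  have hk := (S.inner_α_self_pos k).ne'
  rw [s_apply, inner_sub_left, real_inner_smul_left, real_inner_comm x]
  field_simp
  ring

theorem s_apply_mem_orbit {x y : E} (hy : y ∈ S.orbit x) (k : Fin n) : S.s k y ∈ S.orbit x := by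
  obtain ⟨w, hw, rfl⟩ := hy
  exact ⟨S.s k * w, S.W.mul_mem (S.s_mem_W k) hw, rfl⟩

variable {S} in
theorem IsIntegralWeight.of_mem_orbit {x y : E} (hx : S.IsIntegralWeight x)
    (hy : y ∈ S.orbit x) : S.IsIntegralWeight y := by
  obtain ⟨w, hw, rfl⟩ := hy
  obtain ⟨l, rfl⟩ := S.exists_wordProd_eq hw
  induction l with
  | nil => exact hx
  | cons k l ih => exact (ih (S.wordProd_mem_W l)).s_apply k

theorem repr_sub_nonneg_of_mem_orbit {x y : E} (hx : S.Dominant x) (hy : y ∈ S.orbit x) :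
    0 ≤ S.b.repr (x - y) := by
  obtain ⟨w, hw, rfl⟩ := hy
  exact S.repr_sub_apply_nonneg hx hw

theorem repr_le_of_mem_orbit {m : Fin n → ℕ} (hdom : S.Dominant (S.lam m)) {y : E}
    (hy : y ∈ S.orbit (S.lam m)) (i : Fin n) : S.b.repr y i ≤ m i := by
  have := S.repr_sub_nonneg_of_mem_orbit hdom hy i
  rwa [Finsupp.coe_zero, Pi.zero_apply, map_sub, Finsupp.sub_apply, repr_lam, sub_nonneg] at this

theorem eq_of_dominant_of_norm_eq {x y : E} (hx : S.Dominant x) (hxy : ‖x‖ = ‖y‖)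
    (h : 0 ≤ S.b.repr (y - x)) : x = y := by
  have hinner : 0 ≤ ⟪x, y - x⟫ := by
    rw [← S.b.sum_repr (y - x), inner_sum]
    exact Finset.sum_nonneg fun k _ => by
      rw [real_inner_smul_right, S.hb]
      exact mul_nonneg (h k) (hx k)
  have hexp : ‖y‖ ^ 2 = ‖x‖ ^ 2 + 2 * ⟪x, y - x⟫ + ‖y - x‖ ^ 2 := by
    rw [← norm_add_sq_real, add_sub_cancel]
  have hsq : ‖y - x‖ ^ 2 ≤ 0 := by
    rw [hxy] at hexp
    linarith
  exact (sub_eq_zero.1 (norm_eq_zero.1 (pow_eq_zero_iff two_ne_zero |>.1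
    (hsq.antisymm (sq_nonneg _))))).symm

theorem exists_inner_neg_of_mem_orbit {x y : E} (hx : S.Dominant x) (hy : y ∈ S.orbit x)
    (hne : y ≠ x) : ∃ k, ⟪y, S.α k⟫ < 0 := by
  by_contra! h
  obtain ⟨w, hw, rfl⟩ := hy
  exact hne (S.eq_of_dominant_of_norm_eq h (w.norm_map x) (S.repr_sub_apply_nonneg hx hw))

theorem repr_sub_pos_of_inner_neg {x y : E} (hx : S.Dominant x) (hy : y ∈ S.orbit x) {k : Fin n}
    (hk : ⟪y, S.α k⟫ < 0) : 0 < S.b.repr (x - y) k := by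
  have hnn := S.repr_sub_nonneg_of_mem_orbit hx hy
  refine (hnn k).lt_of_ne fun h0 => ?_
  have hle : ⟪x - y, S.α k⟫ ≤ 0 := by
    rw [inner_α_eq_sum]
    refine Finset.sum_nonpos fun j _ => ?_
    obtain rfl | hjk := eq_or_ne j k
    · rw [← h0, Finsupp.coe_zero, Pi.zero_apply, zero_mul]
    · exact mul_nonpos_of_nonneg_of_nonpos (hnn j) (S.offdiag j k hjk)
  rw [inner_sub_left] at hle
  linarith [hx k]

theorem exists_height_descent {x y : E} (hx : S.Dominant x) (hxint : S.IsIntegralWeight x)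
    (hy : y ∈ S.orbit x) (hne : y ≠ x) :
    ∃ k, ⟪y, S.α k⟫ < 0 ∧ 0 < S.b.repr (x - y) k ∧
      S.height (x - S.s k y) + 1 ≤ S.height (x - y) := by
  obtain ⟨k, hk⟩ := S.exists_inner_neg_of_mem_orbit hx hy hne
  refine ⟨k, hk, S.repr_sub_pos_of_inner_neg hx hy hk, ?_⟩
  obtain ⟨z, hz⟩ := hxint.of_mem_orbit hy k
  have hz0 : (z : ℝ) < 0 := by nlinarith [S.inner_α_self_pos k]
  have hz1 : (z : ℝ) ≤ -1 := by exact_mod_cast Int.le_sub_one_of_lt (Int.cast_lt_zero.1 hz0)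
  rw [S.s_apply_of_cartan hz, sub_sub_eq_add_sub, add_sub_right_comm, height_add_smul_α]
  linarith

theorem mem_comp0_of_inner_lam_pos {m : Fin n → ℕ} {I : Set (Fin n)} {k : Fin n} (hk : k ∉ I)
    (h : 0 < ⟪S.lam m, S.α k⟫) : k ∈ S.comp0 m I :=
  ⟨hk, .single ⟨h, fun _ => nofun, fun _ h' => Option.some_injective _ h' ▸ hk⟩⟩

theorem mem_comp0_of_inner_ne_zero {m : Fin n → ℕ} {I : Set (Fin n)} {j k : Fin n}
    (hj : j ∈ S.comp0 m I) (hk : k ∉ I) (hjk : j ≠ k) (h : ⟪S.α j, S.α k⟫ ≠ 0) :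
    k ∈ S.comp0 m I :=
  ⟨hk, hj.2.tail ⟨⟨hjk, h⟩, fun _ h' => Option.some_injective _ h' ▸ hj.1,
    fun _ h' => Option.some_injective _ h' ▸ hk⟩⟩

theorem mem_parabolicOrbit_of_s_apply_mem {m : Fin n → ℕ} (hdom : S.Dominant (S.lam m))
    {I : Set (Fin n)} {x : E} {k : Fin n} (hk : k ∉ I) (hxk : ⟪x, S.α k⟫ < 0)
    (hx : S.s k x ∈ S.parabolicOrbit (S.comp0 m I) (S.lam m))
    (hsupp : ∀ j ∉ S.comp0 m I, S.b.repr (S.lam m - S.s k x) j = 0) :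
    x ∈ S.parabolicOrbit (S.comp0 m I) (S.lam m) ∧
      ∀ j ∉ S.comp0 m I, S.b.repr (S.lam m - x) j = 0 := by
  have hkI : k ∈ S.comp0 m I := by
    rcases (hdom k).lt_or_eq with hpos | hzero
    · exact S.mem_comp0_of_inner_lam_pos hk hpos
    have hneg : ∑ j, S.b.repr (S.lam m - S.s k x) j * ⟪S.α j, S.α k⟫ ≠ 0 := by
      rw [← inner_α_eq_sum, inner_sub_left, inner_s_apply_α, ← hzero]
      linarith
    obtain ⟨j, -, hj⟩ := Finset.exists_ne_zero_of_sum_ne_zero hneg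
    have hjI : j ∈ S.comp0 m I := not_imp_comm.1 (hsupp j) (left_ne_zero_of_mul hj)
    obtain rfl | hjk := eq_or_ne j k
    · exact hjI
    · exact S.mem_comp0_of_inner_ne_zero hjI hk hjk (right_ne_zero_of_mul hj)
  obtain ⟨v, hv, hvx⟩ := hx
  refine ⟨⟨S.s k * v, (S.WI _).mul_mem (S.s_mem_WI hkI) hv, ?_⟩, fun j hj => ?_⟩
  · change S.s k (v (S.lam m)) = x
    rw [show v (S.lam m) = S.s k x from hvx, s_apply_s_apply]
  · have hjk : j ≠ k := fun h => hj (h ▸ hkI)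
    rw [← hsupp j hj, S.repr_sub_s_apply_of_ne hjk]

theorem mem_parabolicOrbit_of_height_le {m : Fin n → ℕ} (hdom : S.Dominant (S.lam m))
    (I : Set (Fin n)) (N : ℕ) {x : E} (hx : x ∈ S.orbit (S.lam m))
    (hN : S.height (S.lam m - x) ≤ N) (hI : ∀ i ∈ I, S.b.repr (S.lam m - x) i = 0) :
    x ∈ S.parabolicOrbit (S.comp0 m I) (S.lam m) ∧
      ∀ j ∉ S.comp0 m I, S.b.repr (S.lam m - x) j = 0 := by
  induction N using Nat.strong_induction_on generalizing x with
  | _ N ih =>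
    obtain rfl | hne := eq_or_ne x (S.lam m)
    · exact ⟨⟨1, one_mem _, rfl⟩, fun j _ => by simp⟩
    obtain ⟨k, hxk, hdk, hdesc⟩ :=
      S.exists_height_descent hdom (S.isIntegralWeight_lam m) hx hne
    have hkI : k ∉ I := fun hk => hdk.ne' (hI k hk)
    have hx' := S.s_apply_mem_orbit hx k
    have hpos := S.height_nonneg (S.repr_sub_nonneg_of_mem_orbit hdom hx')
    have hI' : ∀ i ∈ I, S.b.repr (S.lam m - S.s k x) i = 0 := fun i hi => by
      rw [← hI i hi, S.repr_sub_s_apply_of_ne (ne_of_mem_of_not_mem hi hkI)]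
    cases N with
    | zero =>
      rw [Nat.cast_zero] at hN
      linarith
    | succ N =>
      obtain ⟨h₁, h₂⟩ := ih N N.lt_add_one hx' (by push_cast at hN; linarith) hI'
      exact S.mem_parabolicOrbit_of_s_apply_mem hdom hkI hxk h₁ h₂

theorem parabolicOrbit_subset_F_ (m : Fin n → ℕ) (I : Set (Fin n)) :
    S.parabolicOrbit (S.comp0 m I) (S.lam m) ⊆ S.F_ m I := by
  rintro _ ⟨v, hv, rfl⟩
  refine ⟨subset_convexHull ℝ _ ⟨v, S.WI_le_W _ hv, rfl⟩, fun i hi => ?_⟩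
  rw [c, S.repr_apply_of_mem_WI hv fun h => h.1 hi, repr_lam]

theorem convex_F_ (m : Fin n → ℕ) (I : Set (Fin n)) : Convex ℝ (S.F_ m I) := by
  rintro x ⟨hx, hxI⟩ y ⟨hy, hyI⟩ a b ha hb hab
  refine ⟨convex_convexHull ℝ _ hx hy ha hb hab, fun i hi => ?_⟩
  simp only [c, map_add, map_smul, Finsupp.add_apply, Finsupp.smul_apply, smul_eq_mul] at hxI hyI ⊢
  rw [hxI i hi, hyI i hi, ← add_mul, hab, one_mul]

theorem F_subset_convexHull_parabolicOrbit {m : Fin n → ℕ} (hdom : S.Dominant (S.lam m))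
    (I : Set (Fin n)) : S.F_ m I ⊆ convexHull ℝ (S.parabolicOrbit (S.comp0 m I) (S.lam m)) := by
  classical
  rintro x ⟨hx, hxI⟩
  set J := Finset.univ.filter (· ∈ I)
  let f : E →ₗ[ℝ] ℝ := ∑ i ∈ J, S.b.coord i
  have hf : ∀ y, f y = ∑ i ∈ J, S.b.repr y i := by simp [f]
  have hle : ∀ y ∈ S.orbit (S.lam m), ∀ i, S.b.repr y i ≤ m i := fun y hy =>
    S.repr_le_of_mem_orbit hdom hy
  refine convexHull_mono ?_ (mem_convexHull_inter_of_le (f := f) (r := ∑ i ∈ J, (m i : ℝ))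
    (fun y hy => (hf y).trans_le (Finset.sum_le_sum fun i _ => hle y hy i)) hx
    ((hf x).trans (Finset.sum_congr rfl fun i hi => hxI i (Finset.mem_filter.1 hi).2)))
  rintro y ⟨hy, hfy⟩
  have hyI : ∀ i ∈ I, S.b.repr (S.lam m - y) i = 0 := by
    have hsum : ∑ i ∈ J, ((m i : ℝ) - S.b.repr y i) = 0 := by
      rw [Finset.sum_sub_distrib, ← hf, hfy, sub_self]
    intro i hi
    rw [map_sub, Finsupp.sub_apply, repr_lam]
    exact (Finset.sum_eq_zero_iff_of_nonneg fun i _ => sub_nonneg.2 (hle y hy i)).1 hsum i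
      (Finset.mem_filter.2 ⟨Finset.mem_univ i, hi⟩)
  exact (S.mem_parabolicOrbit_of_height_le hdom I _ hy (Nat.le_ceil _) hyI).1

end RootData

end

theorem face_eq_convexHull_parabolic_orbit_general (S : RootData n E) (m : Fin n → ℕ)
    (hdom : S.Dominant (S.lam m)) (I : Set (Fin n)) :
    S.F_ m I =
      convexHull ℝ ((fun w : E ≃ₗᵢ[ℝ] E => w (S.lam m)) ''
        ((S.WI (S.comp0 m I) : Set (E ≃ₗᵢ[ℝ] E)))) :=
  (S.F_subset_convexHull_parabolicOrbit hdom I).antisymm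
    (convexHull_min (S.parabolicOrbit_subset_F_ m I) (S.convex_F_ m I))

/-- the standard parabolic face `F_I` is the convex hull of `W_{I̅⁰}·λ`. -/
theorem face_eq_convexHull_parabolic_orbit (S : RootData n E) (m : Fin n → ℕ)
    (hdom : S.Dominant (S.lam m)) (hint : S.IntegralDom m) (I : Set (Fin n)) :
    S.F_ m I =
      convexHull ℝ ((fun w : E ≃ₗᵢ[ℝ] E => w (S.lam m)) ''
        ((S.WI (S.comp0 m I) : Set (E ≃ₗᵢ[ℝ] E)))) :=
  face_eq_convexHull_parabolic_orbit_general S m hdom I
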